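/- arXiv:2510.00834 — 4 statements merged into one kernel-verified Lean document; each statement's English description precedes it below -/
import Mathlib

section
/- Let (g,B) be a Rota-Baxter Lie algebra of weight -1 and (g₊, g₋, ▷, ▶) the matched pair of Lie algebras on (g,B). Then the operator C on g₊ ⋈ g₋ given by C((B(x₁), B̃(x₂))) = (B(B(x₁)+B̃(x₂)), B̃(B(x₁)+B̃(x₂))) and the operator C̃ given by C̃((B(x₁), B̃(x₂))) = (B(B̃(x₁-x₂)), -B̃(B(x₁-x₂))) are well-defined idempotent Lie algebra endomorphisms of g₊ ⋈ g₋ with C + C̃ = id. -/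
/-- `B̃ = id - B` (weight `-1`). -/
def tB {K : Type*} [Field K] {g : Type*} [LieRing g] [LieAlgebra K g]
    (B : g →ₗ[K] g) : g →ₗ[K] g :=
  (LinearMap.id : g →ₗ[K] g) - B

/-- Descendent bracket of weight `-1`: `[x,y]_B = [B x, y] + [x, B y] - [x,y]`. -/
def dbr {K : Type*} [Field K] {g : Type*} [LieRing g] [LieAlgebra K g]
    (B : g →ₗ[K] g) (x y : g) : g :=
  ⁅B x, y⁆ + ⁅x, B y⁆ - ⁅x, y⁆

/-- The bicrossed product bracket of the matched pair on `(g,B)`, written on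
representatives: `[(B x₁, B̃ x₂), (B y₁, B̃ y₂)]_⋈`. -/
def bowR {K : Type*} [Field K] {g : Type*} [LieRing g] [LieAlgebra K g]
    (B : g →ₗ[K] g) (x₁ x₂ y₁ y₂ : g) : g × g :=
  (⁅B x₁, B y₁⁆ + B ⁅tB B x₂, y₁⁆ - B ⁅tB B y₂, x₁⁆,
   ⁅tB B x₂, tB B y₂⁆ + tB B ⁅B x₁, y₂⁆ - tB B ⁅B y₁, x₂⁆)

/-- The operator `C((B x₁, B̃ x₂)) = (B(B x₁ + B̃ x₂), B̃(B x₁ + B̃ x₂))`, on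
representatives. -/
def Cf {K : Type*} [Field K] {g : Type*} [LieRing g] [LieAlgebra K g]
    (B : g →ₗ[K] g) (x₁ x₂ : g) : g × g :=
  (B (B x₁ + tB B x₂), tB B (B x₁ + tB B x₂))

/-- The operator `C̃((B x₁, B̃ x₂)) = (B(B̃(x₁ - x₂)), -B̃(B(x₁ - x₂)))`, on
representatives. -/
def Ctf {K : Type*} [Field K] {g : Type*} [LieRing g] [LieAlgebra K g]
    (B : g →ₗ[K] g) (x₁ x₂ : g) : g × g :=
  (B (tB B (x₁ - x₂)), - tB B (B (x₁ - x₂)))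


section RBAux
set_option autoImplicit false
variable {K : Type*} [Field K] {g : Type*} [LieRing g] [LieAlgebra K g]
  (B : g →ₗ[K] g)
  (hB : ∀ x y : g, ⁅B x, B y⁆ = B (⁅B x, y⁆ + ⁅x, B y⁆ - ⁅x, y⁆))

lemma rb_htB (z : g) : tB B z = z - B z := rfl

include hB in
lemma rb_hB' (x y : g) : ⁅B x, B y⁆ = B ⁅B x, y⁆ + B ⁅x, B y⁆ - B ⁅x, y⁆ := by
  rw [hB]; simp [map_add, map_sub]

include hB in
lemma rb_L2 (u v : g) : bowR B u u v v = (B ⁅u, v⁆, tB B ⁅u, v⁆) := by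
  have sk : ∀ a b : g, ⁅a, b⁆ = -⁅b, a⁆ := fun a b => (lie_skew a b).symm
  unfold bowR
  rw [sk (tB B v) u, sk (B v) u]
  simp only [rb_htB, lie_sub, sub_lie, lie_add, add_lie, map_add, map_sub, map_neg,
    rb_hB' B hB, Prod.mk.injEq]
  constructor <;> abel

include hB in
lemma rb_L1 (x₁ x₂ y₁ y₂ : g) :
    B (dbr B x₁ y₁ + ⁅tB B x₂, y₁⁆ - ⁅tB B y₂, x₁⁆)
      + tB B (dbr (tB B) x₂ y₂ + ⁅B x₁, y₂⁆ - ⁅B y₁, x₂⁆)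
      = ⁅B x₁ + tB B x₂, B y₁ + tB B y₂⁆ := by
  have sk : ∀ a b : g, ⁅a, b⁆ = -⁅b, a⁆ := fun a b => (lie_skew a b).symm
  rw [sk (tB B y₂) x₁, sk (B y₁) x₂]
  simp only [dbr, rb_htB, lie_sub, sub_lie, lie_add, add_lie, map_add, map_sub, map_neg,
    rb_hB' B hB]
  abel

include hB in
lemma rb_L3 (x₁ x₂ y₁ y₂ : g) :
    B (dbr B x₁ y₁ + ⁅tB B x₂, y₁⁆ - ⁅tB B y₂, x₁⁆
      - (dbr (tB B) x₂ y₂ + ⁅B x₁, y₂⁆ - ⁅B y₁, x₂⁆))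
      = ⁅B (x₁ - x₂), B (y₁ - y₂)⁆ := by
  have sk : ∀ a b : g, ⁅a, b⁆ = -⁅b, a⁆ := fun a b => (lie_skew a b).symm
  rw [sk (tB B y₂) x₁, sk (B y₁) x₂]
  simp only [dbr, rb_htB, lie_sub, sub_lie, lie_add, add_lie, map_add, map_sub, map_neg,
    rb_hB' B hB]
  abel

include hB in
lemma rb_L4 (x₁ x₂ y₁ y₂ : g) :
    tB B (dbr B x₁ y₁ + ⁅tB B x₂, y₁⁆ - ⁅tB B y₂, x₁⁆
      - (dbr (tB B) x₂ y₂ + ⁅B x₁, y₂⁆ - ⁅B y₁, x₂⁆))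
      = -⁅tB B (x₁ - x₂), tB B (y₁ - y₂)⁆ := by
  have sk : ∀ a b : g, ⁅a, b⁆ = -⁅b, a⁆ := fun a b => (lie_skew a b).symm
  rw [sk (tB B y₂) x₁, sk (B y₁) x₂]
  simp only [dbr, rb_htB, lie_sub, sub_lie, lie_add, add_lie, map_add, map_sub, map_neg,
    rb_hB' B hB]
  abel

include hB in
lemma rb_L5 (w z : g) :
    bowR B (tB B w) (-(B w)) (tB B z) (-(B z))
      = (-B ⁅tB B w, tB B z⁆, -tB B ⁅B w, B z⁆) := by
  have sk : ∀ a b : g, ⁅a, b⁆ = -⁅b, a⁆ := fun a b => (lie_skew a b).symm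
  unfold bowR
  rw [sk (tB B (-(B z))) (tB B w), sk (B (tB B z)) (-(B w))]
  simp only [rb_htB, lie_sub, sub_lie, lie_add, add_lie, lie_neg, neg_lie,
    map_add, map_sub, map_neg, rb_hB' B hB, Prod.mk.injEq]
  constructor <;> abel

lemma rb_Ctf_eq (a b : g) :
    Ctf B a b = (tB B (B a) - B (tB B b), -(tB B (B a) - B (tB B b))) := by
  simp only [Ctf, rb_htB, map_sub, Prod.mk.injEq]

end RBAux

/-- for a Rota-Baxter Lie algebra `(g,B)` of weight `-1`, the
operators `C` and `C̃` on `g₊ ⋈ g₋` are well defined, idempotent, Lie algebra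
homomorphisms, and satisfy `C + C̃ = id` (all written on representatives). -/
theorem stmt11 {K : Type*} [Field K] {g : Type*} [LieRing g] [LieAlgebra K g]
    (B : g →ₗ[K] g)
    (hB : ∀ x y : g, ⁅B x, B y⁆ = B (⁅B x, y⁆ + ⁅x, B y⁆ - ⁅x, y⁆)) :
    -- C is well defined
    (∀ x₁ x₂ y₁ y₂ : g, B x₁ = B y₁ → tB B x₂ = tB B y₂ →
      Cf B x₁ x₂ = Cf B y₁ y₂) ∧
    -- C̃ is well defined
    (∀ x₁ x₂ y₁ y₂ : g, B x₁ = B y₁ → tB B x₂ = tB B y₂ →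
      Ctf B x₁ x₂ = Ctf B y₁ y₂) ∧
    -- C + C̃ = id
    (∀ x₁ x₂ : g, Cf B x₁ x₂ + Ctf B x₁ x₂ = (B x₁, tB B x₂)) ∧
    -- C is idempotent
    (∀ x₁ x₂ : g, Cf B (B x₁ + tB B x₂) (B x₁ + tB B x₂) = Cf B x₁ x₂) ∧
    -- C̃ is idempotent
    (∀ x₁ x₂ : g, Ctf B (tB B (x₁ - x₂)) (-(B (x₁ - x₂))) = Ctf B x₁ x₂) ∧
    -- C is a Lie algebra homomorphism: C [v,w]_⋈ = [C v, C w]_⋈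
    (∀ x₁ x₂ y₁ y₂ : g,
      Cf B (dbr B x₁ y₁ + ⁅tB B x₂, y₁⁆ - ⁅tB B y₂, x₁⁆)
           (dbr (tB B) x₂ y₂ + ⁅B x₁, y₂⁆ - ⁅B y₁, x₂⁆) =
        bowR B (B x₁ + tB B x₂) (B x₁ + tB B x₂) (B y₁ + tB B y₂) (B y₁ + tB B y₂)) ∧
    -- C̃ is a Lie algebra homomorphism: C̃ [v,w]_⋈ = [C̃ v, C̃ w]_⋈
    (∀ x₁ x₂ y₁ y₂ : g,
      Ctf B (dbr B x₁ y₁ + ⁅tB B x₂, y₁⁆ - ⁅tB B y₂, x₁⁆)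
            (dbr (tB B) x₂ y₂ + ⁅B x₁, y₂⁆ - ⁅B y₁, x₂⁆) =
        bowR B (tB B (x₁ - x₂)) (-(B (x₁ - x₂))) (tB B (y₁ - y₂)) (-(B (y₁ - y₂)))) := by
  refine ⟨?_, ?_, ?_, ?_, ?_, ?_, ?_⟩
  · intro x₁ x₂ y₁ y₂ h1 h2
    simp only [Cf, h1, h2]
  · intro x₁ x₂ y₁ y₂ h1 h2
    rw [rb_Ctf_eq, rb_Ctf_eq, h1, h2]
  · intro x₁ x₂
    simp only [Cf, Ctf, rb_htB, map_add, map_sub, Prod.mk_add_mk, Prod.mk.injEq]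
    constructor <;> abel
  · intro x₁ x₂
    simp only [Cf, rb_htB, map_add, map_sub, Prod.mk.injEq]
    constructor <;> abel
  · intro x₁ x₂
    simp only [Ctf, rb_htB, map_add, map_sub, map_neg, sub_neg_eq_add, Prod.mk.injEq]
    constructor <;> abel
  · intro x₁ x₂ y₁ y₂
    simp only [Cf]
    rw [rb_L1 B hB, rb_L2 B hB]
  · intro x₁ x₂ y₁ y₂
    simp only [Ctf]
    rw [rb_L4 B hB, rb_L3 B hB, rb_L5 B hB]
    simp [map_neg]
end

section
/- Let (g,B) be a Rota-Baxter Lie algebra of weight -1, (g₊, g₋, ▷, ▶) the matched pair on (g,B), C the Lie algebra projection on g₊ ⋈ g₋ given by C((B(x₁),B̃(x₂))) = (B(B(x₁)+B̃(x₂)), B̃(B(x₁)+B̃(x₂))), and g₁ = im C with Rota-Baxter operator B₁((x,u)) = C((x,0)). Then the map π: g → g₁, π(x) = (B(x), B̃(x)), is an isomorphism of Rota-Baxter Lie algebras from (g,B) to (g₁,B₁), i.e., π is a bijective Lie algebra homomorphism with π∘B = B₁∘π. -/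
/-- for a Rota-Baxter Lie algebra `(g,B)` of weight `-1`, the map
`π(x) = (B x, B̃ x)` is an isomorphism of Rota-Baxter Lie algebras from `(g,B)`
onto `(g₁ = im C, B₁)`, where `B₁((x,u)) = C((x,0))`: it is injective, surjective
onto `im C`, a Lie algebra homomorphism into the bicrossed product, and
intertwines `B` with `B₁`. -/
theorem stmt12 {K : Type*} [Field K] {g : Type*} [LieRing g] [LieAlgebra K g]
    (B : g →ₗ[K] g)
    (hB : ∀ x y : g, ⁅B x, B y⁆ = B (⁅B x, y⁆ + ⁅x, B y⁆ - ⁅x, y⁆)) :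
    -- π is injective
    (∀ x y : g, ((B x, tB B x) : g × g) = (B y, tB B y) → x = y) ∧
    -- π is surjective onto g₁ = im C
    (∀ x₁ x₂ : g, ∃ x : g, ((B x, tB B x) : g × g) = Cf B x₁ x₂) ∧
    -- π is a Lie algebra homomorphism: [π x, π y]_⋈ = π [x,y]
    (∀ x y : g, bowR B x x y y = ((B ⁅x, y⁆, tB B ⁅x, y⁆) : g × g)) ∧
    -- π ∘ B = B₁ ∘ π, where B₁ (π x) = C((B x, 0)) = Cf B x 0
    (∀ x : g, Cf B x 0 = ((B (B x), tB B (B x)) : g × g)) := by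
  refine ⟨?_, ?_, ?_, ?_⟩
  · intro x y h
    have h1 : B x = B y := congrArg Prod.fst h
    have h2 : x - B x = y - B y := by
      have := congrArg Prod.snd h
      simpa [tB] using this
    have : x = y := by
      have := congrArg₂ (· + ·) h2 h1
      simpa using this
    exact this
  · intro x₁ x₂
    exact ⟨B x₁ + tB B x₂, rfl⟩
  · intro x y
    have key := hB x y
    simp only [bowR, tB, LinearMap.sub_apply, LinearMap.id_apply, Prod.mk.injEq]
    constructor
    · rw [key]
      simp only [map_sub, map_add, sub_lie, map_sub]
      rw [← lie_skew (B y) x, ← lie_skew y x]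
      simp only [map_neg]
      abel
    · simp only [sub_lie, lie_sub, map_sub, key, map_add]
      rw [← lie_skew (B y) x]
      simp only [map_neg]
      abel
  · intro x
    simp [Cf, tB]
end

section
/- Let (g,B) be a Rota-Baxter Lie algebra of weight -1, B̃ = id - B, h₊ = ker B̃, h₋ = ker B. Then the operators B̄ and B̃̄ on the quotient Lie algebra g_B/(h₊ + h₋) induced by B and B̃ respectively are well defined Rota-Baxter operators of weight -1 with B̄ + B̃̄ = id. -/
/-- for a Rota-Baxter Lie algebra `(g,B)` of weight `-1`,
`B̃ = id - B`, `h₊ = ker B̃`, `h₋ = ker B`, the induced operators `B̄` and `B̃̄` on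
the quotient Lie algebra `g_B/(h₊ + h₋)` are well defined Rota-Baxter operators
of weight `-1` with `B̄ + B̃̄ = id` (expressed modulo the ideal `H = h₊ + h₋`). -/
theorem stmt14 {K : Type*} [Field K] {g : Type*} [LieRing g] [LieAlgebra K g]
    (B : g →ₗ[K] g)
    (hB : ∀ x y : g, ⁅B x, B y⁆ = B (⁅B x, y⁆ + ⁅x, B y⁆ - ⁅x, y⁆)) :
    -- B̄ is well defined
    (∀ x y : g, x - y ∈ LinearMap.ker (tB B) ⊔ LinearMap.ker B →
      B x - B y ∈ LinearMap.ker (tB B) ⊔ LinearMap.ker B) ∧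
    -- B̃̄ is well defined
    (∀ x y : g, x - y ∈ LinearMap.ker (tB B) ⊔ LinearMap.ker B →
      tB B x - tB B y ∈ LinearMap.ker (tB B) ⊔ LinearMap.ker B) ∧
    -- B̄ is a Rota-Baxter operator of weight -1 on g_B/(h₊+h₋)
    (∀ x y : g,
      dbr B (B x) (B y) - B (dbr B (B x) y + dbr B x (B y) - dbr B x y) ∈
        LinearMap.ker (tB B) ⊔ LinearMap.ker B) ∧
    -- B̃̄ is a Rota-Baxter operator of weight -1 on g_B/(h₊+h₋)
    (∀ x y : g,
      dbr B (tB B x) (tB B y)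
          - tB B (dbr B (tB B x) y + dbr B x (tB B y) - dbr B x y) ∈
        LinearMap.ker (tB B) ⊔ LinearMap.ker B) ∧
    -- B̄ + B̃̄ = id
    (∀ x : g, (B x + tB B x) - x ∈ LinearMap.ker (tB B) ⊔ LinearMap.ker B) := by
  have hmem : ∀ z : g, tB B z = 0 → z ∈ LinearMap.ker (tB B) ⊔ LinearMap.ker B :=
    fun z hz => Submodule.mem_sup_left (LinearMap.mem_ker.mpr hz)
  have hmem' : ∀ z : g, B z = 0 → z ∈ LinearMap.ker (tB B) ⊔ LinearMap.ker B :=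
    fun z hz => Submodule.mem_sup_right (LinearMap.mem_ker.mpr hz)
  refine ⟨?_, ?_, ?_, ?_, ?_⟩
  · intro x y h
    rw [← map_sub]
    obtain ⟨a, ha, b, hb, hab⟩ := Submodule.mem_sup.mp h
    rw [LinearMap.mem_ker] at ha hb
    have hBa : B a = a := by
      have := ha
      simp only [tB, LinearMap.sub_apply, LinearMap.id_apply, sub_eq_zero] at this
      exact this.symm
    have : B (x - y) = a := by rw [← hab, map_add, hBa, hb, add_zero]
    rw [this]
    exact Submodule.mem_sup_left (LinearMap.mem_ker.mpr ha)
  · intro x y h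
    rw [← map_sub]
    obtain ⟨a, ha, b, hb, hab⟩ := Submodule.mem_sup.mp h
    rw [LinearMap.mem_ker] at ha hb
    have : tB B (x - y) = b := by
      rw [← hab, map_add, ha, zero_add]
      simp [tB, hb]
    rw [this]
    exact Submodule.mem_sup_right (LinearMap.mem_ker.mpr hb)
  · intro x y
    refine hmem _ ?_
    simp only [dbr, tB, LinearMap.sub_apply, LinearMap.id_apply, map_add, map_sub, hB,
      lie_sub, sub_lie, lie_add, add_lie]
    abel
  · intro x y
    refine hmem' _ ?_
    simp only [dbr, tB, LinearMap.sub_apply, LinearMap.id_apply, map_add, map_sub, hB,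
      lie_sub, sub_lie, lie_add, add_lie]
    abel
  · intro x
    have : (B x + tB B x) - x = 0 := by
      simp [tB]
    rw [this]
    exact Submodule.zero_mem _
end

section
/- Let (g,B,S) be a quadratic Rota-Baxter Lie algebra of weight -1 with B̃ = id - B, g₊ = im B, g₋ = im B̃. Then the bilinear form S' on the bicrossed product g₊ ⋈ g₋ defined by S'((B(x₁),B̃(x₂)),(B(y₁),B̃(y₂))) = S(B(x₁),y₂) + S(B(y₁),x₂) is well defined, nondegenerate, symmetric, and invariant with respect to the bicrossed bracket. -/
/-- The bilinear form `S'` on `g₊ ⋈ g₋`, written on representatives: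
`S'((B x₁, B̃ x₂), (B y₁, B̃ y₂)) = S(B x₁, y₂) + S(B y₁, x₂)`. -/
def Sf {K : Type*} [Field K] {g : Type*} [LieRing g] [LieAlgebra K g]
    (B : g →ₗ[K] g) (S : g →ₗ[K] g →ₗ[K] K) (x₁ x₂ y₁ y₂ : g) : K :=
  S (B x₁) y₂ + S (B y₁) x₂

/-- for a quadratic Rota-Baxter Lie algebra `(g,B,S)` of weight
`-1`, the bilinear form `S'` on the bicrossed product `g₊ ⋈ g₋` is well defined,
symmetric, nondegenerate, and invariant with respect to the bicrossed bracket
(all written on representatives). -/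
theorem stmt15 {K : Type*} [Field K] {g : Type*} [LieRing g] [LieAlgebra K g]
    (B : g →ₗ[K] g) (S : g →ₗ[K] g →ₗ[K] K)
    (hB : ∀ x y : g, ⁅B x, B y⁆ = B (⁅B x, y⁆ + ⁅x, B y⁆ - ⁅x, y⁆))
    (hSsymm : ∀ x y : g, S x y = S y x)
    (hSnondeg : ∀ x : g, (∀ y : g, S x y = 0) → x = 0)
    (hSinv : ∀ x y z : g, S ⁅x, y⁆ z = S x ⁅y, z⁆)
    (hBS : ∀ x y : g, S (B x) y + S x (B y) - S x y = 0) :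
    -- S' is well defined
    (∀ x₁ x₂ x₁' x₂' y₁ y₂ y₁' y₂' : g,
      B x₁ = B x₁' → tB B x₂ = tB B x₂' → B y₁ = B y₁' → tB B y₂ = tB B y₂' →
      Sf B S x₁ x₂ y₁ y₂ = Sf B S x₁' x₂' y₁' y₂') ∧
    -- S' is symmetric
    (∀ x₁ x₂ y₁ y₂ : g, Sf B S x₁ x₂ y₁ y₂ = Sf B S y₁ y₂ x₁ x₂) ∧
    -- S' is nondegenerate
    (∀ x₁ x₂ : g, (∀ y₁ y₂ : g, Sf B S x₁ x₂ y₁ y₂ = 0) →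
      B x₁ = 0 ∧ tB B x₂ = 0) ∧
    -- S' is invariant: S'([v,w]_⋈, z) = S'(v, [w,z]_⋈)
    (∀ x₁ x₂ y₁ y₂ z₁ z₂ : g,
      Sf B S (dbr B x₁ y₁ + ⁅tB B x₂, y₁⁆ - ⁅tB B y₂, x₁⁆)
             (dbr (tB B) x₂ y₂ + ⁅B x₁, y₂⁆ - ⁅B y₁, x₂⁆) z₁ z₂ =
      Sf B S x₁ x₂ (dbr B y₁ z₁ + ⁅tB B y₂, z₁⁆ - ⁅tB B z₂, y₁⁆)
                   (dbr (tB B) y₂ z₂ + ⁅B y₁, z₂⁆ - ⁅B z₁, y₂⁆)) := by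
  have hadj : ∀ a b : g, S (B a) b = S a (tB B b) := by
    intro a b
    simp only [tB, LinearMap.sub_apply, LinearMap.id_apply, map_sub]
    linear_combination hBS a b
  have ht : ∀ a b : g, S (tB B a) b = S a (B b) := by
    intro a b
    simp only [tB, LinearMap.sub_apply, LinearMap.id_apply, map_sub]
    linear_combination - hBS a b
  have hBdbr : ∀ a b : g, B (dbr B a b) = ⁅B a, B b⁆ := by
    intro a b; simp only [dbr]; exact (hB a b).symm
  have htdbr : ∀ a b : g, tB B (dbr (tB B) a b) = ⁅tB B a, tB B b⁆ := by
    intro a b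
    simp only [dbr, tB, LinearMap.sub_apply, LinearMap.id_apply, map_sub, map_add,
      sub_lie, lie_sub]
    rw [hB a b]
    simp only [map_add, map_sub]
    abel
  have hkey2 : ∀ c a b : g, S (B c) (dbr (tB B) a b) = S c ⁅tB B a, tB B b⁆ := by
    intro c a b; rw [hadj, htdbr]
  have lemA : ∀ a b c : g, S (B ⁅a, b⁆) c = S a ⁅b, tB B c⁆ := by
    intro a b c; rw [hadj, hSinv]
  have skewS : ∀ a b c : g, S a ⁅b, c⁆ = - S a ⁅c, b⁆ := by
    intro a b c; rw [← lie_skew c b, map_neg, neg_neg]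
  have skewS' : ∀ a b c : g, S ⁅a, b⁆ c = - S ⁅b, a⁆ c := by
    intro a b c; rw [← lie_skew b a, map_neg, LinearMap.neg_apply, neg_neg]
  have lemC : ∀ a b c : g, S a ⁅b, c⁆ = - S c ⁅b, a⁆ := by
    intro a b c
    rw [← hSinv a b c, hSsymm ⁅a, b⁆ c, skewS c a b]
  refine ⟨?_, ?_, ?_, ?_⟩
  · -- well-defined
    intro x₁ x₂ x₁' x₂' y₁ y₂ y₁' y₂' hx1 hx2 hy1 hy2
    simp only [Sf]
    rw [hx1, hy1, hadj x₁' y₂, hy2, ← hadj, hadj y₁' x₂, hx2, ← hadj]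
  · -- symmetric
    intro x₁ x₂ y₁ y₂
    simp only [Sf]; ring
  · -- nondegenerate
    intro x₁ x₂ h
    have h1 : B x₁ = 0 := by
      apply hSnondeg
      intro y
      have := h 0 y
      simpa [Sf] using this
    refine ⟨h1, hSnondeg _ fun y => ?_⟩
    have := h y 0
    simp only [Sf, map_zero, LinearMap.zero_apply] at this
    rw [ht x₂ y, hSsymm]
    simpa [h1] using this
  · -- invariant
    intro x₁ x₂ y₁ y₂ z₁ z₂
    simp only [Sf, map_add, map_sub, LinearMap.add_apply, LinearMap.sub_apply]
    rw [hBdbr, hBdbr, hkey2, hkey2]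
    have h1 : S ⁅B x₁, B y₁⁆ z₂ = S (B x₁) ⁅B y₁, z₂⁆ := hSinv _ _ _
    have h2 : S (B ⁅tB B x₂, y₁⁆) z₂ = - S (B ⁅tB B z₂, y₁⁆) x₂ := by
      linear_combination lemA (tB B x₂) y₁ z₂ + lemA (tB B z₂) y₁ x₂ +
        lemC (tB B x₂) y₁ (tB B z₂)
    have h3 : S (B ⁅tB B y₂, x₁⁆) z₂ = - S x₁ ⁅tB B y₂, tB B z₂⁆ := by
      linear_combination lemA (tB B y₂) x₁ z₂ + lemC x₁ (tB B y₂) (tB B z₂) +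
        lemC (tB B y₂) x₁ (tB B z₂) - skewS (tB B z₂) x₁ (tB B y₂)
    have h4 : S z₁ ⁅tB B x₂, tB B y₂⁆ = S (B ⁅tB B y₂, z₁⁆) x₂ := by
      linear_combination lemC z₁ (tB B x₂) (tB B y₂) - lemA (tB B y₂) z₁ x₂ -
        skewS (tB B y₂) z₁ (tB B x₂)
    have h5 : S (B z₁) ⁅B x₁, y₂⁆ = - S (B x₁) ⁅B z₁, y₂⁆ := by
      linear_combination lemC (B z₁) (B x₁) y₂ + lemC (B x₁) (B z₁) y₂ -
        skewS y₂ (B x₁) (B z₁)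
    have h6 : S (B z₁) ⁅B y₁, x₂⁆ = - S ⁅B y₁, B z₁⁆ x₂ := by
      linear_combination - hSinv (B z₁) (B y₁) x₂ + skewS' (B y₁) (B z₁) x₂
    linear_combination h1 + h2 - h3 + h4 + h5 - h6
end
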